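/- arXiv:2106.10917 — 2 statements merged into one kernel-verified Lean document; each statement's English description precedes it below -/
import Mathlib

section
/- For integers k_1,...,k_r ≥ 1, r ≥ 1, and n ≥ 0, the multi-Stirling numbers of the first kind satisfy S_1^{(k_1,...,k_r)}(n+r, r) = r! · binom(n+r, n) · Σ_{m=0}^{n} B_m^{(k_1,...,k_r)} · [n m], where [n m] is the unsigned Stirling number of the first kind and B_m^{(k_1,...,k_r)} are the multi-Bernoulli numbers. -/
open scoped Classical in
/-- The coefficient of `z^n` in the multiple logarithm
`Li_{k_1,...,k_r}(z) = Σ_{0<m_1<⋯<m_r} z^{m_r}/(m_1^{k_1}⋯m_r^{k_r})`, i.e.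
`Σ_{0<m_1<⋯<m_{r-1}<m_r=n} 1/(m_1^{k_1}⋯m_r^{k_r})` (integer indices allowed; for a strictly
increasing positive tuple, `m_r` is the supremum of its entries). -/
noncomputable def liCoeff (r : ℕ) (k : Fin r → ℤ) (n : ℕ) : ℚ :=
  ∑ m : Fin r → Fin (n + 1),
    if StrictMono m ∧ (∀ i, 0 < m i) ∧ (Finset.univ.sup fun i => (m i : ℕ)) = n then
      (∏ i, ((m i : ℕ) : ℚ) ^ (k i))⁻¹
    else 0

/-- Multi-Stirling numbers of the first kind:
`S_1^{(k_1,...,k_r)}(n,r) = n! ⬝ Σ_{0<m_1<⋯<m_{r-1}<n} 1/(m_1^{k_1}⋯m_{r-1}^{k_{r-1}} n^{k_r})`,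
so that `Li_{k_1,...,k_r}(t) = Σ_{n≥r} S_1^{(k_1,...,k_r)}(n,r) t^n/n!`. -/
noncomputable def multiStirling1 (r : ℕ) (k : Fin r → ℕ) (n : ℕ) : ℚ :=
  (n.factorial : ℚ) * liCoeff r (fun i => (k i : ℤ)) n

/-- The formal power series `1 - e^{-t} ∈ ℚ⟦t⟧`. -/
noncomputable def oneSubExpNeg : PowerSeries ℚ :=
  1 - PowerSeries.rescale (-1) (PowerSeries.exp ℚ)

/-- Multi-Bernoulli numbers, defined by the formal power series identity
`Σ_{n≥0} B_n^{(k_1,...,k_r)} t^n/n! = Li_{k_1,...,k_r}(1-e^{-t})/(1-e^{-t})^r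
  = Σ_{m≥r} (S_1^{(k_1,...,k_r)}(m,r)/m!) (1-e^{-t})^{m-r}` in `ℚ⟦t⟧`,
where `S_1^{(k_1,...,k_r)}(m,r)/m! = liCoeff r k m`. Since `(1-e^{-t})^j` has order `≥ j`,
the `n`-th coefficient of the series only involves the (finitely many) terms with
`j = m - r ≤ n`, so the infinite sum may be truncated exactly. -/
noncomputable def multiBernoulli (r : ℕ) (k : Fin r → ℕ) (n : ℕ) : ℚ :=
  (n.factorial : ℚ) *
    PowerSeries.coeff (R := ℚ) n
      (∑ j ∈ Finset.range (n + 1), liCoeff r (fun i => (k i : ℤ)) (j + r) • oneSubExpNeg ^ j)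

/-!
Write `a_j = S_1^{(k)}(j+r,r)/(j+r)!`, so that `B_m = Σ_j a_j ⬝ m! [t^m] (1-e^{-t})^j`.
Expanding `(1-e^{-t})^j` binomially gives `m! [t^m] (1-e^{-t})^j = Σ_i (-1)^i C(j,i) (-i)^m`,
hence, as `⟨-i⟩_n = (-1)^n n! C(i,n)`,
`Σ_m [n m] ⬝ m! [t^m] (1-e^{-t})^j = (-1)^n n! Σ_i (-1)^i C(j,i) C(i,n)`.
Up to sign, this last sum is the `j`-th forward difference of `x ↦ C(x,n)` at `0`, which is
`δ_{jn}`. So `Σ_m B_m [n m] = n! a_n`, and `(n+r)! = r! C(n+r,n) n!` finishes the proof.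
-/

open Finset PowerSeries

lemma PowerSeries.rescale_exp_pow {A : Type*} [CommRing A] [Algebra ℚ A] (a : A) (i : ℕ) :
    rescale a (exp A) ^ i = rescale (i * a) (exp A) := by
  rw [← map_pow, exp_pow_eq_rescale_exp, rescale_rescale]

lemma PowerSeries.factorial_mul_coeff_rescale_exp {A : Type*} [CommRing A] [Algebra ℚ A] (a : A)
    (m : ℕ) : m.factorial * coeff m (rescale a (exp A)) = a ^ m := by
  rw [coeff_rescale, coeff_exp, ← map_natCast (algebraMap ℚ A), mul_left_comm, ← map_mul,
    mul_one_div_cancel (Nat.cast_ne_zero.mpr m.factorial_ne_zero), map_one, mul_one]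

lemma oneSubExpNeg_pow (j : ℕ) :
    oneSubExpNeg ^ j =
      ∑ i ∈ range (j + 1), ((-1) ^ i * j.choose i : ℚ) • rescale (-i : ℚ) (exp ℚ) := by
  rw [oneSubExpNeg, ← neg_add_eq_sub, add_pow]
  refine sum_congr rfl fun i _ => ?_
  rw [one_pow, mul_one, neg_pow, rescale_exp_pow, mul_neg_one, smul_eq_C_mul, map_mul, map_pow,
    map_neg, map_one, map_natCast]
  ring

lemma factorial_mul_coeff_oneSubExpNeg_pow (m j : ℕ) :
    m.factorial * coeff m (oneSubExpNeg ^ j) =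
      ∑ i ∈ range (j + 1), (-1) ^ i * j.choose i * (-i : ℚ) ^ m := by
  simp only [oneSubExpNeg_pow, map_sum, coeff_smul, mul_sum, smul_eq_mul]
  refine sum_congr rfl fun i _ => ?_
  rw [mul_left_comm, factorial_mul_coeff_rescale_exp]

lemma X_dvd_oneSubExpNeg : X ∣ oneSubExpNeg := by
  rw [X_dvd_iff, oneSubExpNeg, map_sub, map_one, ← coeff_zero_eq_constantCoeff_apply,
    coeff_rescale]
  simp

lemma coeff_oneSubExpNeg_pow_of_lt {m j : ℕ} (h : m < j) : coeff m (oneSubExpNeg ^ j) = 0 :=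
  X_pow_dvd_iff.mp (pow_dvd_pow_of_dvd X_dvd_oneSubExpNeg j) m h

lemma sum_neg_one_pow_mul_choose_mul_choose {R : Type*} [CommRing R] (j n : ℕ) :
    ∑ i ∈ range (j + 1), (-1 : R) ^ i * j.choose i * i.choose n =
      if j = n then (-1) ^ n else 0 := by
  have hΔ := congrArg (fun z : ℤ => (-1 : R) ^ j * z) (fwdDiff_iter_choose_zero n j)
  simp only [fwdDiff_iter_eq_sum_shift, zero_add, smul_eq_mul, mul_one] at hΔ
  push_cast at hΔ
  rw [mul_sum, apply_ite (fun z : R => (-1) ^ j * z), mul_one, mul_zero] at hΔ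
  convert hΔ using 1
  · refine sum_congr rfl fun i hi => ?_
    have hij : j + (j - i) = i + 2 * (j - i) := by rw [mem_range] at hi; omega
    rw [← mul_assoc, ← mul_assoc, ← pow_add, hij, pow_add, pow_mul, neg_one_sq, one_pow,
      mul_one]
  · split_ifs with h <;> simp [h]

lemma ascPochhammer_eval_neg_natCast {R : Type*} [CommRing R] (n i : ℕ) :
    (ascPochhammer R n).eval (-(i : R)) = (-1) ^ n * n.factorial * i.choose n := by
  rw [ascPochhammer_eval_neg_eq_descPochhammer, descPochhammer_eval_eq_descFactorial,
    Nat.descFactorial_eq_factorial_mul_choose]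
  push_cast
  ring

lemma sum_ascPochhammer_coeff_mul_pow {R : Type*} [CommSemiring R] (n : ℕ) (x : R) :
    ∑ m ∈ range (n + 1), ((ascPochhammer ℕ n).coeff m : R) * x ^ m =
      (ascPochhammer R n).eval x := by
  rw [← ascPochhammer_map (Nat.castRingHom R), Polynomial.eval_map,
    Polynomial.eval₂_eq_sum_range' _ (n := n + 1) (by rw [ascPochhammer_natDegree]; omega)]
  simp

lemma sum_ascPochhammer_coeff_mul_factorial_mul_coeff_oneSubExpNeg_pow (n j : ℕ) :
    ∑ m ∈ range (n + 1),
        ((ascPochhammer ℕ n).coeff m : ℚ) * (m.factorial * coeff m (oneSubExpNeg ^ j)) =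
      if j = n then (n.factorial : ℚ) else 0 := by
  calc _ = ∑ i ∈ range (j + 1),
          (-1) ^ i * j.choose i * (ascPochhammer ℚ n).eval (-i : ℚ) := by
        simp_rw [factorial_mul_coeff_oneSubExpNeg_pow, mul_sum, ← sum_ascPochhammer_coeff_mul_pow]
        rw [sum_comm]
        exact sum_congr rfl fun i _ => by rw [mul_sum]; exact sum_congr rfl fun m _ => by ring
    _ = (-1) ^ n * n.factorial *
          ∑ i ∈ range (j + 1), (-1 : ℚ) ^ i * j.choose i * i.choose n := by
        simp_rw [ascPochhammer_eval_neg_natCast, mul_sum]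
        exact sum_congr rfl fun i _ => by ring
    _ = _ := by
        rw [sum_neg_one_pow_mul_choose_mul_choose]
        split_ifs
        · rw [mul_right_comm, ← pow_add, ← two_mul, pow_mul, neg_one_sq, one_pow, one_mul]
        · rw [mul_zero]

lemma multiBernoulli_eq_sum_liCoeff_mul {r : ℕ} (k : Fin r → ℕ) {m n : ℕ} (hmn : m ≤ n) :
    multiBernoulli r k m = ∑ j ∈ range (n + 1),
      liCoeff r (fun i => (k i : ℤ)) (j + r) * (m.factorial * coeff m (oneSubExpNeg ^ j)) := by
  rw [multiBernoulli, map_sum, mul_sum]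
  refine sum_subset (range_subset_range.mpr (by omega)) (fun j _ hj => ?_) |>.trans
    (sum_congr rfl fun j _ => ?_)
  · rw [coeff_smul, coeff_oneSubExpNeg_pow_of_lt (by simpa using hj), smul_zero, mul_zero]
  · rw [coeff_smul, smul_eq_mul, mul_left_comm]

lemma sum_multiBernoulli_mul_ascPochhammer_coeff (r : ℕ) (k : Fin r → ℕ) (n : ℕ) :
    ∑ m ∈ range (n + 1), multiBernoulli r k m * ((ascPochhammer ℕ n).coeff m : ℚ) =
      n.factorial * liCoeff r (fun i => (k i : ℤ)) (n + r) := by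
  calc _ = ∑ j ∈ range (n + 1), liCoeff r (fun i => (k i : ℤ)) (j + r) *
          ∑ m ∈ range (n + 1),
            ((ascPochhammer ℕ n).coeff m : ℚ) * (m.factorial * coeff m (oneSubExpNeg ^ j)) := by
        rw [sum_congr rfl fun m hm => by
          rw [multiBernoulli_eq_sum_liCoeff_mul k (mem_range_succ_iff.mp hm)]]
        simp_rw [sum_mul, mul_sum]
        rw [sum_comm]
        exact sum_congr rfl fun j _ => sum_congr rfl fun m _ => by ring
    _ = _ := by
        simp_rw [sum_ascPochhammer_coeff_mul_factorial_mul_coeff_oneSubExpNeg_pow, mul_ite,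
          mul_zero]
        rw [sum_ite_eq', if_pos (self_mem_range_succ n), mul_comm]

theorem multiStirling1_eq_sum_multiBernoulli_general (r : ℕ) (k : Fin r → ℕ) (n : ℕ) :
    multiStirling1 r k (n + r) =
      (r.factorial : ℚ) * ((n + r).choose n : ℚ) *
        ∑ m ∈ Finset.range (n + 1),
          multiBernoulli r k m * ((ascPochhammer ℕ n).coeff m : ℚ) := by
  rw [sum_multiBernoulli_mul_ascPochhammer_coeff, multiStirling1,
    ← Nat.add_choose_mul_factorial_mul_factorial, Nat.choose_symm_add]
  push_cast
  ring

/-- For integers `k_1,...,k_r ≥ 1`, `r ≥ 1` and `n ≥ 0`, the multi-Stirling numbers of the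
first kind satisfy `S_1^{(k_1,...,k_r)}(n+r,r) = r! ⬝ C(n+r,n) ⬝ Σ_{m=0}^{n} B_m^{(k_1,...,k_r)}
⬝ [n m]`, where `[n m]` is the unsigned Stirling number of the first kind, i.e. the coefficient
of `x^m` in the rising factorial `⟨x⟩_n = x(x+1)⋯(x+n-1)`. -/
theorem multiStirling1_eq_sum_multiBernoulli (r : ℕ) (hr : 1 ≤ r) (k : Fin r → ℕ)
    (hk : ∀ i, 1 ≤ k i) (n : ℕ) :
    multiStirling1 r k (n + r) =
      (r.factorial : ℚ) * ((n + r).choose n : ℚ) *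
        ∑ m ∈ Finset.range (n + 1),
          multiBernoulli r k m * ((ascPochhammer ℕ n).coeff m : ℚ) :=
  multiStirling1_eq_sum_multiBernoulli_general r k n
end

section
/- For all integers n ≥ r ≥ 1, the multi-Lah number with all indices equal to 1 equals the unsigned Lah number: L^{(1,1,...,1)}(n,r) = L(n,r) = binom(n−1, r−1) · n!/r!, where there are r indices equal to 1. -/
/-- Multi-Lah numbers, defined by the formal power series identity
`Σ_{n≥r} L^{(k_1,...,k_r)}(n,r) t^n/n! = Li_{k_1,...,k_r}(1-e^{-t})/(1-t)^r
  = (1-t)^{-r} ⬝ Σ_{m} liCoeff(m) (1-e^{-t})^m` in `ℚ⟦t⟧` (integer indices allowed).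
Since `(1-e^{-t})^m` has order `≥ m`, the `n`-th coefficient of the series only involves the
(finitely many) terms with `m ≤ n`, so the infinite sum may be truncated exactly. -/
noncomputable def multiLah (r : ℕ) (k : Fin r → ℤ) (n : ℕ) : ℚ :=
  (n.factorial : ℚ) *
    PowerSeries.coeff (R := ℚ) n
      (((1 - PowerSeries.X : PowerSeries ℚ) ^ r)⁻¹ *
        ∑ m ∈ Finset.range (n + 1), liCoeff r k m • oneSubExpNeg ^ m)

open Finset PowerSeries

theorem Fin.strictMono_snoc_iff {α : Type*} [Preorder α] {n : ℕ} (f : Fin n → α) (x : α) :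
    StrictMono (Fin.snoc f x : Fin (n + 1) → α) ↔ StrictMono f ∧ ∀ i, f i < x := by
  rw [← Fin.insertNth_last', Fin.strictMono_insertNth_iff]
  simp [Fin.castSucc_lt_last, (Fin.castSucc_lt_last _).not_ge]

theorem Fin.sup_snoc {α : Type*} [SemilatticeSup α] [OrderBot α] {n : ℕ} (f : Fin n → α)
    (x : α) :
    (univ.sup (Fin.snoc f x : Fin (n + 1) → α)) = univ.sup f ⊔ x := by
  simp [Fin.univ_castSuccEmb, Finset.sup_map, sup_comm, Function.comp_def]

theorem PowerSeries.coeff_pow_eq_zero_of_lt {R : Type*} [CommSemiring R] {g : R⟦X⟧}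
    (hg : constantCoeff g = 0) {j m : ℕ} (hjm : j < m) : coeff j (g ^ m) = 0 :=
  X_pow_dvd_iff.mp (pow_dvd_pow_of_dvd (X_dvd_iff.mpr hg) m) j hjm

theorem PowerSeries.trunc_sum_smul_pow {R : Type*} [CommRing R] (a : ℕ → R) {g : R⟦X⟧}
    (hg : constantCoeff g = 0) (n : ℕ) :
    trunc (n + 1) (∑ m ∈ range (n + 1), a m • g ^ m) = trunc (n + 1) ((mk a).subst g) := by
  ext j
  simp only [coeff_trunc]
  split_ifs with hj
  · rw [coeff_subst' (HasSubst.of_constantCoeff_zero' hg), map_sum,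
      finsum_eq_sum_of_support_subset (s := range (n + 1))]
    · simp [coeff_mk]
    · intro m hm
      by_contra hmn
      rw [coe_range, Set.mem_Iio] at hmn
      exact hm (smul_eq_zero_of_right _ (coeff_pow_eq_zero_of_lt hg (by omega)))
  · rfl

theorem PowerSeries.inv_one_sub_X_pow_succ {K : Type*} [Field K] (d : ℕ) :
    ((1 - X : K⟦X⟧) ^ (d + 1))⁻¹ = mk fun n => ((d + n).choose d : K) :=
  (PowerSeries.inv_eq_iff_mul_eq_one (by simp)).mpr (mk_add_choose_mul_one_sub_pow_eq_one K d)

theorem liCoeff_zero (k : Fin 0 → ℤ) (n : ℕ) : liCoeff 0 k n = if n = 0 then 1 else 0 := by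
  simp [liCoeff, Subsingleton.strictMono, eq_comm]

theorem liCoeff_succ_zero (r : ℕ) (k : Fin (r + 1) → ℤ) : liCoeff (r + 1) k 0 = 0 :=
  sum_eq_zero fun _ _ => if_neg fun h => (h.2.1 0).ne' (Fin.eq_zero _)

open scoped Classical in
theorem liCoeff_eq_sum_of_le {r n N : ℕ} (k : Fin r → ℤ) (h : n ≤ N) :
    liCoeff r k n = ∑ m : Fin r → Fin (N + 1),
      if StrictMono m ∧ (∀ i, 0 < m i) ∧ (univ.sup fun i => (m i : ℕ)) = n then
        (∏ i, ((m i : ℕ) : ℚ) ^ k i)⁻¹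
      else 0 := by
  refine Fintype.sum_of_injective (Fin.castLE (by omega) ∘ ·)
    (fun m m' hm => funext fun i => Fin.castLE_injective _ (congrFun hm i)) _ _ ?_ ?_
  · intro m hm
    rw [if_neg]
    rintro ⟨-, -, hsup⟩
    refine hm ⟨fun i => ⟨m i, ?_⟩, funext fun i => Fin.ext rfl⟩
    have := Finset.le_sup (f := fun i => (m i : ℕ)) (mem_univ i)
    omega
  · intro m
    have hmono : StrictMono (Fin.castLE (Nat.succ_le_succ h) ∘ m) ↔ StrictMono m := Iff.rfl
    simp only [Function.comp_apply, Fin.val_castLE, hmono, Fin.lt_def, Fin.val_zero]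

theorem snoc_strictMono_pos_sup_eq_iff {r n : ℕ} (hn : n ≠ 0) (a : Fin (n + 1))
    (q : Fin r → Fin (n + 1)) :
    (StrictMono (Fin.snoc q a : Fin (r + 1) → Fin (n + 1)) ∧
        (∀ i, 0 < (Fin.snoc q a : Fin (r + 1) → Fin (n + 1)) i) ∧
        (univ.sup fun i => ((Fin.snoc q a : Fin (r + 1) → Fin (n + 1)) i : ℕ)) = n) ↔
      a = Fin.last n ∧ StrictMono q ∧ (∀ i, 0 < q i) ∧
        (univ.sup fun i => (q i : ℕ)) < n := by
  have hsup : (fun i => ((Fin.snoc q a : Fin (r + 1) → Fin (n + 1)) i : ℕ)) =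
      Fin.snoc (fun i => (q i : ℕ)) (a : ℕ) := Fin.comp_snoc _ _ _
  rw [Fin.strictMono_snoc_iff, Fin.forall_fin_succ', hsup, Fin.sup_snoc, Fin.ext_iff,
    Fin.val_last, Finset.sup_lt_iff (Nat.pos_of_ne_zero hn)]
  simp only [Fin.snoc_castSucc, Fin.snoc_last, Fin.lt_def, Fin.val_zero]
  constructor
  · rintro ⟨⟨hq, hlt⟩, ⟨hpos, -⟩, hmax⟩
    rw [max_eq_right (Finset.sup_le fun i _ => (hlt i).le)] at hmax
    exact ⟨hmax, hq, hpos, fun i _ => (hlt i).trans_eq hmax⟩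
  · rintro ⟨ha, hq, hpos, hlt⟩
    have hlt' (i : Fin r) : (q i : ℕ) < a := (hlt i (mem_univ i)).trans_eq ha.symm
    rw [max_eq_right (Finset.sup_le fun i _ => (hlt' i).le)]
    exact ⟨⟨hq, hlt'⟩, ⟨hpos, by omega⟩, ha⟩

theorem liCoeff_succ (r : ℕ) (k : Fin (r + 1) → ℤ) {n : ℕ} (hn : n ≠ 0) :
    liCoeff (r + 1) k n =
      ((n : ℚ) ^ k (Fin.last r))⁻¹ *
        ∑ s ∈ range n, liCoeff r (fun i => k i.castSucc) s := by
  have snoc_eq : ⇑(Fin.snocEquiv fun _ => Fin (n + 1)) =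
      fun p => (Fin.snoc p.2 p.1 : Fin (r + 1) → Fin (n + 1)) := rfl
  rw [liCoeff, ← (Fin.snocEquiv fun _ => Fin (n + 1)).sum_comp, snoc_eq,
    Fintype.sum_prod_type, Fintype.sum_eq_single (Fin.last n), sum_congr rfl fun s hs =>
      liCoeff_eq_sum_of_le _ (mem_range.mp hs).le, sum_comm, mul_sum]
  · refine sum_congr rfl fun q _ => ?_
    simp only [snoc_strictMono_pos_sup_eq_iff hn, true_and, ite_and, sum_ite_irrel,
      sum_const_zero, sum_ite_eq, mem_range]
    split_ifs <;> simp [Fin.prod_univ_castSucc, mul_comm]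
  · exact fun a ha => sum_eq_zero fun q _ =>
      if_neg fun h => ha ((snoc_strictMono_pos_sup_eq_iff hn a q).mp h).1

noncomputable def liSeries (r : ℕ) (k : Fin r → ℤ) : ℚ⟦X⟧ := mk (liCoeff r k)

theorem liSeries_zero (k : Fin 0 → ℤ) : liSeries 0 k = 1 := by
  ext n
  simp [liSeries, liCoeff_zero, coeff_one]

theorem constantCoeff_liSeries_succ (r : ℕ) (k : Fin (r + 1) → ℤ) :
    constantCoeff (liSeries (r + 1) k) = 0 := by
  rw [← coeff_zero_eq_constantCoeff_apply, liSeries, coeff_mk, liCoeff_succ_zero]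

theorem one_sub_X_mul_derivative_liSeries (r : ℕ) (k : Fin (r + 1) → ℤ)
    (hk : k (Fin.last r) = 1) :
    (1 - X) * d⁄dX ℚ (liSeries (r + 1) k) = liSeries r (fun i => k i.castSucc) := by
  have partial_sum (n : ℕ) :
      (n : ℚ) * liCoeff (r + 1) k n = ∑ s ∈ range n, liCoeff r (fun i => k i.castSucc) s := by
    rcases eq_or_ne n 0 with rfl | hn
    · simp
    · rw [liCoeff_succ r k hn, hk, zpow_one, mul_inv_cancel_left₀ (Nat.cast_ne_zero.mpr hn)]
  ext n
  rw [sub_mul, one_mul, map_sub, liSeries, liSeries, coeff_mk, coeff_derivative, coeff_mk,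
    mul_comm, ← Nat.cast_succ, partial_sum, sum_range_succ]
  rcases n with _ | n
  · simp
  · rw [coeff_succ_X_mul, coeff_derivative, coeff_mk, mul_comm, ← Nat.cast_succ, partial_sum]
    ring

theorem derivative_oneSubExpNeg : d⁄dX ℚ oneSubExpNeg = 1 - oneSubExpNeg := by
  ext n
  simp [oneSubExpNeg, coeff_derivative, coeff_rescale, coeff_exp, Nat.factorial_succ, pow_succ]
  field_simp

theorem constantCoeff_oneSubExpNeg : constantCoeff oneSubExpNeg = 0 := by
  rw [oneSubExpNeg, map_sub, map_one, ← coeff_zero_eq_constantCoeff_apply, coeff_rescale,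
    coeff_exp]
  simp

theorem liSeries_ones_subst_oneSubExpNeg (r : ℕ) :
    (liSeries r fun _ => 1).subst oneSubExpNeg = C (r.factorial : ℚ)⁻¹ * X ^ r := by
  have hg : HasSubst oneSubExpNeg := HasSubst.of_constantCoeff_zero' constantCoeff_oneSubExpNeg
  induction r with
  | zero => simp [liSeries_zero, ← coe_substAlgHom hg]
  | succ r ih =>
    refine derivative.ext ?_ ?_
    · rw [derivative_subst hg, derivative_oneSubExpNeg]
      calc (d⁄dX ℚ (liSeries (r + 1) fun _ => 1)).subst oneSubExpNeg * (1 - oneSubExpNeg)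
          = ((1 - X) * d⁄dX ℚ (liSeries (r + 1) fun _ => 1)).subst oneSubExpNeg := by
            rw [← coe_substAlgHom hg, map_mul, map_sub, map_one, coe_substAlgHom, subst_X hg,
              mul_comm]
        _ = C (r.factorial : ℚ)⁻¹ * X ^ r := by
            rw [one_sub_X_mul_derivative_liSeries r _ rfl, ih]
        _ = d⁄dX ℚ (C ((r + 1).factorial : ℚ)⁻¹ * X ^ (r + 1)) := by
            ext n
            simp only [coeff_derivative, coeff_C_mul, coeff_X_pow, add_left_inj]
            rcases eq_or_ne n r with rfl | hn
            · simp [Nat.factorial_succ]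
              field_simp
            · simp [hn]
    · rw [map_mul, constantCoeff_C, map_pow, constantCoeff_X, zero_pow r.succ_ne_zero, mul_zero]
      exact constantCoeff_subst_eq_zero constantCoeff_oneSubExpNeg _
        (constantCoeff_liSeries_succ r _)

theorem multiLah_eq_factorial_mul_coeff_subst (r : ℕ) (k : Fin r → ℤ) (n : ℕ) :
    multiLah r k n =
      n.factorial * coeff n (((1 - X) ^ r)⁻¹ * (liSeries r k).subst oneSubExpNeg) := by
  rw [multiLah, ← coeff_coe_trunc_of_lt n.lt_succ_self, ← trunc_mul_trunc,
    trunc_sum_smul_pow _ constantCoeff_oneSubExpNeg, trunc_mul_trunc,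
    coeff_coe_trunc_of_lt n.lt_succ_self, liSeries]

/-- For all integers `n ≥ r ≥ 1`, the multi-Lah number with all `r` indices equal to `1`
equals the unsigned Lah number: `L^{(1,...,1)}(n,r) = L(n,r) = C(n−1, r−1) ⬝ n!/r!`. -/
theorem multiLah_all_ones (n r : ℕ) (hr : 1 ≤ r) (hn : r ≤ n) :
    multiLah r (fun _ => (1 : ℤ)) n =
      ((n - 1).choose (r - 1) : ℚ) * (n.factorial : ℚ) / (r.factorial : ℚ) := by
  obtain ⟨d, rfl⟩ : ∃ d, r = d + 1 := ⟨r - 1, by omega⟩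
  rw [multiLah_eq_factorial_mul_coeff_subst, liSeries_ones_subst_oneSubExpNeg,
    inv_one_sub_X_pow_succ, mul_left_comm, coeff_C_mul, coeff_mul_X_pow', if_pos hn, coeff_mk,
    show d + (n - (d + 1)) = n - 1 by omega, Nat.add_sub_cancel]
  ring
end
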